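/- arXiv:2412.04334 — 2 statements merged into one kernel-verified Lean document; each statement's English description precedes it below -/
import Mathlib

section
/- For all real parameters μ > 0, ϑ > 0, ζ > 0 and all real a, h, the three-parameter Mittag-Leffler function satisfies the Taylor-type expansion E_{μ,ϑ}^{ζ}(a + h) = ∑_{n=0}^∞ (h^n / n!) (ζ)_n E_{μ,ϑ+nμ}^{ζ+n}(a), the series on the right converging absolutely. -/
/-!
Expanding `(a + h) ^ m` by the binomial theorem writes `E_{μ,ϑ}^ζ(a + h)` as the sum along
antidiagonals of the double series `(ζ)_{n+k} h^n a^k / (n! k! Γ(μ(n+k) + ϑ))`. Since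
`(ζ)_{n+k} = (ζ)_n (ζ+n)_k`, the `n`-th row of that series sums to
`(h^n / n!) (ζ)_n E_{μ,ϑ+nμ}^{ζ+n}(a)`, so it remains to justify the rearrangement. The double
series converges absolutely: its absolute values sum along antidiagonals to the series of
`E_{μ,ϑ}^ζ(|a| + |h|)`, which converges by the ratio test because log-convexity of `Γ` gives
`Γ(x) / Γ(x + μ) ≤ (x - 1) ^ (-μ)`.
-/

open Real

/-- Rising factorial (Pochhammer symbol) `(ζ)_n = Γ(ζ+n)/Γ(ζ)`. -/
noncomputable def risingFactorial (ζ : ℝ) (n : ℕ) : ℝ :=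
  Real.Gamma (ζ + n) / Real.Gamma ζ

/-- Three-parameter (Prabhakar) Mittag-Leffler function. -/
noncomputable def mittagLeffler (μ ϑ ζ z : ℝ) : ℝ :=
  ∑' m : ℕ, risingFactorial ζ m * z ^ m / (m.factorial * Real.Gamma (μ * m + ϑ))

open Filter Topology Finset Nat

section DoubleSeries

variable {α A : Type*} [AddCommMonoid A] [HasAntidiagonal A]

theorem HasSum.sum_antidiagonal [AddCommMonoid α] [TopologicalSpace α] [ContinuousAdd α]
    [RegularSpace α] {f : A × A → α} {a : α} (hf : HasSum f a) :
    HasSum (fun n ↦ ∑ p ∈ antidiagonal n, f p) a :=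
  (HasAntidiagonal.sigmaAntidiagonalEquivProd.hasSum_iff.mpr hf).sigma fun n ↦ by
    simpa only [Function.comp_apply, HasAntidiagonal.sigmaAntidiagonalEquivProd_apply,
      sum_coe_sort] using hasSum_fintype fun p : antidiagonal n ↦ f p

theorem summable_of_summable_sum_antidiagonal_of_nonneg {f : A × A → ℝ} (hf : 0 ≤ f)
    (h : Summable fun n ↦ ∑ p ∈ antidiagonal n, f p) : Summable f := by
  refine HasAntidiagonal.sigmaAntidiagonalEquivProd.summable_iff.mp <|
    (summable_sigma_of_nonneg fun _ ↦ hf _).mpr ⟨fun _ ↦ .of_finite, ?_⟩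
  simpa only [Function.comp_apply, HasAntidiagonal.sigmaAntidiagonalEquivProd_apply,
    tsum_fintype, sum_coe_sort] using h

theorem summable_norm_tsum_fiberwise {β γ E : Type*} [NormedAddCommGroup E] [CompleteSpace E]
    {f : β × γ → E} (hf : Summable fun p ↦ ‖f p‖) :
    Summable fun b ↦ ‖∑' c, f (b, c)‖ :=
  .of_nonneg_of_le (fun _ ↦ norm_nonneg _)
    (fun b ↦ norm_tsum_le_tsum_norm (hf.prod_factor b))
    ((summable_prod_of_nonneg fun _ ↦ norm_nonneg _).mp hf).2

end DoubleSeries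

namespace Real

theorem Gamma_div_Gamma_add_le {μ x : ℝ} (hμ : 0 < μ) (hx : 1 < x) :
    Gamma x / Gamma (x + μ) ≤ (x - 1) ^ (-μ) := by
  have hx₁ : 0 < x - 1 := by linarith
  have hΓ : ∀ {y}, 0 < y → 0 < Gamma y := Gamma_pos_of_pos
  have hslope := convexOn_log_Gamma.slope_mono_adjacent (x := x - 1) (y := x) (z := x + μ)
    hx₁ (by simp only [Set.mem_Ioi]; linarith) (by linarith) (by linarith)
  have hstep : log (Gamma x) - log (Gamma (x - 1)) = log (x - 1) := by
    rw [← sub_add_cancel x 1, Gamma_add_one hx₁.ne', add_sub_cancel_right,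
      log_mul hx₁.ne' (hΓ hx₁).ne', add_sub_cancel_right]
  simp only [Function.comp_apply, sub_sub_cancel, add_sub_cancel_left, hstep, div_one,
    le_div_iff₀ hμ] at hslope
  rw [div_le_iff₀ (hΓ (by linarith)), rpow_def_of_pos hx₁, ← exp_log (hΓ (by linarith)),
    ← exp_log (hΓ (by linarith : 0 < x + μ)), ← exp_add, exp_le_exp]
  linarith

theorem tendsto_Gamma_div_Gamma_add_atTop {μ : ℝ} (hμ : 0 < μ) :
    Tendsto (fun x ↦ Gamma x / Gamma (x + μ)) atTop (𝓝 0) := by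
  have hbound : Tendsto (fun x : ℝ ↦ (x - 1) ^ (-μ)) atTop (𝓝 0) :=
    (tendsto_rpow_neg_atTop hμ).comp (tendsto_atTop_add_const_right _ _ tendsto_id)
  refine tendsto_of_tendsto_of_tendsto_of_le_of_le' tendsto_const_nhds hbound ?_ ?_
  · filter_upwards [eventually_gt_atTop 0] with x hx
    exact div_nonneg (Gamma_pos_of_pos hx).le (Gamma_pos_of_pos (by linarith)).le
  · filter_upwards [eventually_gt_atTop 1] with x hx
    exact Gamma_div_Gamma_add_le hμ hx

end Real

theorem risingFactorial_pos {ζ : ℝ} (hζ : 0 < ζ) (n : ℕ) : 0 < risingFactorial ζ n :=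
  div_pos (Gamma_pos_of_pos (by positivity)) (Gamma_pos_of_pos hζ)

theorem risingFactorial_succ {ζ : ℝ} {n : ℕ} (h : ζ + n ≠ 0) :
    risingFactorial ζ (n + 1) = risingFactorial ζ n * (ζ + n) := by
  rw [risingFactorial, risingFactorial, Nat.cast_succ, ← add_assoc, Gamma_add_one h]
  ring

theorem risingFactorial_add {ζ : ℝ} (hζ : 0 < ζ) (n k : ℕ) :
    risingFactorial ζ (n + k) = risingFactorial ζ n * risingFactorial (ζ + n) k := by
  have hn : Gamma (ζ + n) ≠ 0 := (Gamma_pos_of_pos (by positivity)).ne'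
  rw [risingFactorial, risingFactorial, risingFactorial, Nat.cast_add, ← add_assoc]
  field_simp

noncomputable def mittagLefflerTerm (μ ϑ ζ z : ℝ) (m : ℕ) : ℝ :=
  risingFactorial ζ m * z ^ m / (m ! * Gamma (μ * m + ϑ))

theorem mittagLefflerTerm_succ {μ ϑ ζ : ℝ} (z : ℝ) {m : ℕ} (hζ : ζ + m ≠ 0)
    (hΓ : Gamma (μ * m + ϑ) ≠ 0) :
    mittagLefflerTerm μ ϑ ζ z (m + 1) =
      (ζ + m) / (m + 1) * z * (Gamma (μ * m + ϑ) / Gamma (μ * m + ϑ + μ)) *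
        mittagLefflerTerm μ ϑ ζ z m := by
  have harg : μ * ((m + 1 : ℕ) : ℝ) + ϑ = μ * m + ϑ + μ := by push_cast; ring
  rw [mittagLefflerTerm, mittagLefflerTerm, risingFactorial_succ hζ, harg, factorial_succ,
    Nat.cast_mul, Nat.cast_succ]
  generalize Gamma (μ * m + ϑ) = G at hΓ ⊢
  field_simp
  ring

theorem summable_mittagLefflerTerm {μ : ℝ} (hμ : 0 < μ) (ϑ ζ z : ℝ) :
    Summable (mittagLefflerTerm μ ϑ ζ z) := by
  have hratio : Tendsto (fun m : ℕ ↦ (ζ + m) / (m + 1) * z *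
      (Gamma (μ * m + ϑ) / Gamma (μ * m + ϑ + μ))) atTop (𝓝 0) := by
    have hfrac : Tendsto (fun m : ℕ ↦ (ζ + m) / (m + 1)) atTop (𝓝 1) := by
      have := tendsto_add_mul_div_add_mul_atTop_nhds ζ 1 (1 : ℝ) one_ne_zero
      simpa only [one_mul, div_one, add_comm (1 : ℝ)] using this
    have hlin : Tendsto (fun m : ℕ ↦ μ * m + ϑ) atTop atTop :=
      tendsto_atTop_add_const_right _ _ (tendsto_natCast_atTop_atTop.const_mul_atTop hμ)
    simpa using (hfrac.mul_const z).mul ((Real.tendsto_Gamma_div_Gamma_add_atTop hμ).comp hlin)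
  refine summable_of_ratio_norm_eventually_le (r := 1 / 2) (by norm_num) ?_
  filter_upwards [hratio.norm.eventually (ge_mem_nhds (by norm_num : ‖(0 : ℝ)‖ < 1 / 2)),
    eventually_gt_atTop ⌈|ζ|⌉₊, eventually_gt_atTop ⌈|ϑ| / μ⌉₊] with m hsmall hζm hϑm
  have hζ : 0 < ζ + m := by
    have := Nat.lt_of_ceil_lt hζm; linarith [neg_abs_le ζ]
  have hϑ : 0 < μ * m + ϑ := by
    have := (div_lt_iff₀ hμ).mp (Nat.lt_of_ceil_lt hϑm); linarith [neg_abs_le ϑ]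
  rw [mittagLefflerTerm_succ z hζ.ne' (Gamma_pos_of_pos hϑ).ne', norm_mul]
  exact mul_le_mul_of_nonneg_right hsmall (norm_nonneg _)

theorem hasSum_mittagLefflerTerm {μ : ℝ} (hμ : 0 < μ) (ϑ ζ z : ℝ) :
    HasSum (mittagLefflerTerm μ ϑ ζ z) (mittagLeffler μ ϑ ζ z) :=
  (summable_mittagLefflerTerm hμ ϑ ζ z).hasSum

noncomputable def mittagLefflerDoubleTerm (μ ϑ ζ x y : ℝ) (p : ℕ × ℕ) : ℝ :=
  risingFactorial ζ (p.1 + p.2) * x ^ p.1 * y ^ p.2 /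
    (p.1 ! * p.2 ! * Gamma (μ * ((p.1 + p.2 : ℕ) : ℝ) + ϑ))

section

variable {μ ϑ ζ : ℝ}

theorem sum_antidiagonal_mittagLefflerDoubleTerm (x y : ℝ) (m : ℕ) :
    ∑ p ∈ antidiagonal m, mittagLefflerDoubleTerm μ ϑ ζ x y p =
      mittagLefflerTerm μ ϑ ζ (x + y) m := by
  rw [mittagLefflerTerm, (Commute.all x y).add_pow', mul_sum, sum_div]
  refine sum_congr rfl fun p hp ↦ ?_
  rw [HasAntidiagonal.mem_antidiagonal] at hp
  subst hp
  rw [mittagLefflerDoubleTerm, nsmul_eq_mul, cast_add_choose]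
  field_simp

theorem abs_mittagLefflerDoubleTerm (hμ : 0 ≤ μ) (hϑ : 0 < ϑ) (hζ : 0 < ζ) (x y : ℝ)
    (p : ℕ × ℕ) :
    |mittagLefflerDoubleTerm μ ϑ ζ x y p| = mittagLefflerDoubleTerm μ ϑ ζ |x| |y| p := by
  have hΓ : 0 < Gamma (μ * ((p.1 + p.2 : ℕ) : ℝ) + ϑ) := Gamma_pos_of_pos (by positivity)
  have hden : (0 : ℝ) < p.1 ! * p.2 ! * Gamma (μ * ((p.1 + p.2 : ℕ) : ℝ) + ϑ) := by positivity
  rw [mittagLefflerDoubleTerm, mittagLefflerDoubleTerm, abs_div, abs_of_pos hden, abs_mul,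
    abs_mul, abs_pow, abs_pow, abs_of_pos (risingFactorial_pos hζ _)]

theorem summable_abs_mittagLefflerDoubleTerm (hμ : 0 < μ) (hϑ : 0 < ϑ) (hζ : 0 < ζ)
    (x y : ℝ) : Summable fun p ↦ |mittagLefflerDoubleTerm μ ϑ ζ x y p| := by
  simp only [abs_mittagLefflerDoubleTerm hμ.le hϑ hζ]
  refine summable_of_summable_sum_antidiagonal_of_nonneg (fun p ↦ ?_) ?_
  · rw [Pi.zero_apply, ← abs_abs x, ← abs_abs y, ← abs_mittagLefflerDoubleTerm hμ.le hϑ hζ]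
    exact abs_nonneg _
  · simpa only [sum_antidiagonal_mittagLefflerDoubleTerm] using
      summable_mittagLefflerTerm hμ ϑ ζ (|x| + |y|)

theorem hasSum_mittagLefflerDoubleTerm_row (hμ : 0 < μ) (hζ : 0 < ζ) (x y : ℝ) (n : ℕ) :
    HasSum (fun k ↦ mittagLefflerDoubleTerm μ ϑ ζ x y (n, k))
      (x ^ n / n ! * risingFactorial ζ n * mittagLeffler μ (ϑ + n * μ) (ζ + n) y) := by
  have hrow : (fun k ↦ mittagLefflerDoubleTerm μ ϑ ζ x y (n, k)) = fun k ↦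
      x ^ n / n ! * risingFactorial ζ n * mittagLefflerTerm μ (ϑ + n * μ) (ζ + n) y k := by
    ext k
    have harg : μ * ((n + k : ℕ) : ℝ) + ϑ = μ * k + (ϑ + n * μ) := by push_cast; ring
    rw [mittagLefflerDoubleTerm, mittagLefflerTerm, risingFactorial_add hζ, harg]
    field_simp
  rw [hrow]
  exact (hasSum_mittagLefflerTerm hμ _ _ y).mul_left _

end

/-- Taylor-type expansion of the three-parameter Mittag-Leffler function:
`E_{μ,ϑ}^{ζ}(a+h) = ∑_{n} (h^n/n!) (ζ)_n E_{μ,ϑ+nμ}^{ζ+n}(a)`, the series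
on the right converging absolutely. -/
theorem mittagLeffler_taylor (μ ϑ ζ a h : ℝ) (hμ : 0 < μ) (hϑ : 0 < ϑ) (hζ : 0 < ζ) :
    (Summable fun n : ℕ =>
      |h ^ n / n.factorial * risingFactorial ζ n * mittagLeffler μ (ϑ + n * μ) (ζ + n) a|) ∧
    HasSum (fun n : ℕ =>
        h ^ n / n.factorial * risingFactorial ζ n * mittagLeffler μ (ϑ + n * μ) (ζ + n) a)
      (mittagLeffler μ ϑ ζ (a + h)) := by
  have habs := summable_abs_mittagLefflerDoubleTerm hμ hϑ hζ h a
  have hrows := hasSum_mittagLefflerDoubleTerm_row (ϑ := ϑ) hμ hζ h a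
  have hdiagonals : HasSum (fun m ↦ ∑ p ∈ antidiagonal m, mittagLefflerDoubleTerm μ ϑ ζ h a p)
      (mittagLeffler μ ϑ ζ (a + h)) := by
    simp only [sum_antidiagonal_mittagLefflerDoubleTerm, add_comm a h]
    exact hasSum_mittagLefflerTerm hμ ϑ ζ (h + a)
  have hdouble := habs.of_abs.hasSum
  rw [hdouble.sum_antidiagonal.unique hdiagonals] at hdouble
  refine ⟨?_, hdouble.prod_fiberwise hrows⟩
  simp only [← Real.norm_eq_abs] at habs
  refine (summable_norm_tsum_fiberwise habs).congr
    fun n ↦ by rw [(hrows n).tsum_eq, Real.norm_eq_abs]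
end

section
/- Let 0 < μ ≤ 1, ζ > 0, ϑ ≥ μζ, 0 < θ ≤ 1, λ > 0 and t > 0. Then the mean of the fractional counting process satisfies ∑_{n=0}^∞ n · P(n,t) = ζ Γ(ϑ) λ t^θ / Γ(μ + ϑ), the series converging absolutely. -/
open Real

/-- Probability function of the fractional counting process. -/
noncomputable def fcpP (μ ϑ ζ θ lam : ℝ) (n : ℕ) (t : ℝ) : ℝ :=
  risingFactorial ζ n * Real.Gamma ϑ * (lam * t ^ θ) ^ n / n.factorial *
    ∑' k : ℕ, risingFactorial (ζ + n) k * (-(lam * t ^ θ)) ^ k /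
      (k.factorial * Real.Gamma (μ * (n + k : ℕ) + ϑ))

/-!
Put `x = λ t^θ`. Since `(ζ)_n (ζ+n)_k = (ζ)_{n+k}`, the mean `∑ n P(n,t)` is a double series over
`(n, k)` whose `(n, k)` term is `Γ(ϑ) (ζ)_m / Γ(μm+ϑ) · n x^n (-x)^k / (n! k!)` with `m = n + k`.
Summing along the antidiagonals `n + k = m`, the binomial theorem gives
`∑_{n+k=m} n x^n (-x)^k / (n! k!) = x (x - x)^(m-1) / (m-1)!`, so only `m = 1` survives.
The same computation with `|x|` in place of `±x` turns the absolute double series into a Prabhakar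
series with parameters `(ζ+1, ϑ+μ)`, which converges by the ratio test because
`Γ(s+μ) / Γ(s) → ∞`, a consequence of the log-convexity of `Γ`.
-/

open Filter Topology Finset
open scoped Nat

theorem sum_antidiagonal_pow_mul_pow_div_factorial {K : Type*} [Field K] [CharZero K]
    (a b : K) (m : ℕ) :
    ∑ p ∈ antidiagonal m, a ^ p.1 * b ^ p.2 / (p.1 ! * p.2 !) = (a + b) ^ m / m ! := by
  rw [(Commute.all a b).add_pow', sum_div]
  refine sum_congr rfl fun p hp => ?_
  rw [HasAntidiagonal.mem_antidiagonal] at hp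
  subst hp
  have hchoose : ((p.1 + p.2).choose p.1 : K) * p.1 ! * p.2 ! = (p.1 + p.2)! := by
    rw [Nat.choose_symm_add]
    exact_mod_cast Nat.add_choose_mul_factorial_mul_factorial p.1 p.2
  have hpos : ((p.1 + p.2).choose p.1 : K) ≠ 0 := by
    exact_mod_cast (Nat.choose_pos (Nat.le_add_right p.1 p.2)).ne'
  rw [nsmul_eq_mul, ← hchoose]
  field_simp

theorem sum_antidiagonal_succ_mul_pow_mul_pow_div_factorial {K : Type*} [Field K] [CharZero K]
    (a b : K) (m : ℕ) :
    ∑ p ∈ antidiagonal (m + 1), p.1 * a ^ p.1 * b ^ p.2 / (p.1 ! * p.2 !)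
      = a * (a + b) ^ m / m ! := by
  rw [mul_div_assoc, ← sum_antidiagonal_pow_mul_pow_div_factorial, Nat.sum_antidiagonal_succ,
    mul_sum]
  simp only [Nat.cast_zero, zero_mul, zero_div, zero_add]
  refine sum_congr rfl fun p _ => ?_
  rw [Nat.factorial_succ]
  push_cast
  field_simp
  ring

theorem summable_of_succ_eq_mul {f q : ℕ → ℝ} (hq : Tendsto q atTop (𝓝 0))
    (hf : ∀ n, f (n + 1) = q n * f n) : Summable f := by
  refine summable_of_ratio_norm_eventually_le (r := 1 / 2) (by norm_num) ?_
  filter_upwards [hq.norm.eventually (ge_mem_nhds (by norm_num : ‖(0 : ℝ)‖ < 1 / 2))] with n hn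
  rw [hf, norm_mul]
  exact mul_le_mul_of_nonneg_right hn (norm_nonneg _)

namespace Real

theorem Gamma_add_one_le_Gamma_add_mul_rpow {s μ : ℝ} (hs : 0 < s) (hμ : 0 < μ) (hμ1 : μ < 1) :
    Gamma (s + 1) ≤ Gamma (s + μ) * (s + μ) ^ (1 - μ) := by
  have hsμ : 0 < s + μ := by linarith
  have h := Gamma_mul_add_mul_le_rpow_Gamma_mul_rpow_Gamma hsμ (by linarith : 0 < s + μ + 1) hμ
    (by linarith : 0 < 1 - μ) (by ring)
  rw [mul_comm]
  rwa [show μ * (s + μ) + (1 - μ) * (s + μ + 1) = s + 1 by ring, Gamma_add_one hsμ.ne',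
    mul_rpow hsμ.le (Gamma_pos_of_pos hsμ).le, mul_left_comm,
    ← rpow_add (Gamma_pos_of_pos hsμ), add_sub_cancel, rpow_one] at h

theorem rpow_div_two_le_Gamma_add_div_Gamma {s μ : ℝ} (hs : μ ≤ s) (hμ : 0 < μ) (hμ1 : μ < 1) :
    (s + μ) ^ μ / 2 ≤ Gamma (s + μ) / Gamma s := by
  have hs0 : 0 < s := hμ.trans_le hs
  have hsμ : 0 < s + μ := by linarith
  have hsplit : (s + μ) ^ μ * (s + μ) ^ (1 - μ) = s + μ := by
    rw [← rpow_add hsμ, add_sub_cancel, rpow_one]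
  have hpow : 0 < (s + μ) ^ (1 - μ) := rpow_pos_of_pos hsμ _
  have h := Gamma_add_one_le_Gamma_add_mul_rpow hs0 hμ hμ1
  rw [Gamma_add_one hs0.ne'] at h
  rw [div_le_div_iff₀ two_pos (Gamma_pos_of_pos hs0)]
  refine le_of_mul_le_mul_right ?_ hpow
  nlinarith [Gamma_pos_of_pos hs0]

theorem tendsto_Gamma_add_div_Gamma_atTop {μ : ℝ} (hμ : 0 < μ) :
    Tendsto (fun s => Gamma (s + μ) / Gamma s) atTop atTop := by
  -- Monotonicity of `Γ` on `[2, ∞)` reduces to an exponent `ν < 1`, where log-convexity applies.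
  set ν := min μ (1 / 2)
  have hν : 0 < ν := lt_min hμ (by norm_num)
  have hν1 : ν < 1 := (min_le_right _ _).trans_lt (by norm_num)
  have hlower : Tendsto (fun s => (s + ν) ^ ν / 2) atTop atTop :=
    ((tendsto_rpow_atTop hν).comp (tendsto_atTop_add_const_right _ ν tendsto_id)).atTop_div_const
      two_pos
  refine tendsto_atTop_mono' _ ?_ hlower
  filter_upwards [eventually_ge_atTop 2] with s hs
  have hs0 : 0 < s := by linarith
  calc (s + ν) ^ ν / 2 ≤ Gamma (s + ν) / Gamma s :=
        rpow_div_two_le_Gamma_add_div_Gamma (by linarith [min_le_right μ (1 / 2)]) hν hν1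
    _ ≤ Gamma (s + μ) / Gamma s := by
        gcongr
        exact Gamma_strictMonoOn_Ici.monotoneOn (by simp; linarith) (by simp; linarith)
            (by linarith [min_le_left μ (1 / 2)])

end Real

theorem risingFactorial_succ_right {ζ : ℝ} {m : ℕ} (h : ζ + m ≠ 0) :
    risingFactorial ζ (m + 1) = (ζ + m) * risingFactorial ζ m := by
  rw [risingFactorial, risingFactorial, Nat.cast_succ, ← add_assoc, Gamma_add_one h,
    mul_div_assoc]

theorem risingFactorial_succ_left {ζ : ℝ} (hζ : ζ ≠ 0) (m : ℕ) :
    risingFactorial ζ (m + 1) = ζ * risingFactorial (ζ + 1) m := by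
  rw [risingFactorial, risingFactorial, Gamma_add_one hζ, Nat.cast_succ, add_comm (m : ℝ) 1,
    ← add_assoc]
  field_simp

theorem risingFactorial_mul {ζ : ℝ} (n k : ℕ) (hζ : Gamma (ζ + n) ≠ 0) :
    risingFactorial ζ n * risingFactorial (ζ + n) k = risingFactorial ζ (n + k) := by
  rw [risingFactorial, risingFactorial, risingFactorial, Nat.cast_add, add_assoc]
  field_simp

noncomputable def prabhakarCoeff (μ ϑ ζ : ℝ) (m : ℕ) : ℝ :=
  risingFactorial ζ m / (m ! * Gamma (μ * m + ϑ))

theorem prabhakarCoeff_succ {μ ϑ ζ : ℝ} (hμ : 0 ≤ μ) (hϑ : 0 < ϑ) (hζ : 0 < ζ) (m : ℕ) :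
    prabhakarCoeff μ ϑ ζ (m + 1) = (ζ + m) / (m + 1) *
      (Gamma (μ * m + ϑ) / Gamma (μ * m + ϑ + μ)) * prabhakarCoeff μ ϑ ζ m := by
  have hΓ : Gamma (μ * m + ϑ) ≠ 0 := (Gamma_pos_of_pos (by positivity)).ne'
  rw [prabhakarCoeff, prabhakarCoeff, risingFactorial_succ_right (by positivity),
    Nat.factorial_succ]
  push_cast
  rw [show μ * (m + 1) + ϑ = μ * m + ϑ + μ by ring]
  field_simp

theorem summable_prabhakarCoeff_mul_pow {μ ϑ ζ : ℝ} (hμ : 0 < μ) (hϑ : 0 < ϑ) (hζ : 0 < ζ)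
    (y : ℝ) : Summable fun m => prabhakarCoeff μ ϑ ζ m * y ^ m := by
  have hratio : Tendsto (fun s => Gamma s / Gamma (s + μ)) atTop (𝓝 0) := by
    simpa only [Pi.inv_def, inv_div] using (tendsto_Gamma_add_div_Gamma_atTop hμ).inv_tendsto_atTop
  have hlin : Tendsto (fun m : ℕ => μ * m + ϑ) atTop atTop :=
    tendsto_atTop_add_const_right _ ϑ (tendsto_natCast_atTop_atTop.const_mul_atTop hμ)
  have hq : Tendsto (fun m : ℕ => (ζ + m) / (1 + m) * y *
      (Gamma (μ * m + ϑ) / Gamma (μ * m + ϑ + μ))) atTop (𝓝 0) := by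
    simpa using ((tendsto_add_mul_div_add_mul_atTop_nhds ζ 1 1 one_ne_zero).mul_const y).mul
      (hratio.comp hlin)
  refine summable_of_succ_eq_mul hq fun m => ?_
  rw [prabhakarCoeff_succ hμ.le hϑ hζ, pow_succ, add_comm 1 (m : ℝ)]
  ring

theorem Summable.tsum_prod_eq_tsum_sum_antidiagonal {α : Type*} [AddCommMonoid α]
    [TopologicalSpace α] [ContinuousAdd α] [T3Space α] {f : ℕ × ℕ → α} (hf : Summable f) :
    ∑' p, f p = ∑' m, ∑ p ∈ antidiagonal m, f p := by
  have hsigma := HasAntidiagonal.sigmaAntidiagonalEquivProd.summable_iff.2 hf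
  rw [← HasAntidiagonal.sigmaAntidiagonalEquivProd.tsum_eq f]
  refine (Summable.tsum_sigma' (fun m => (hasSum_fintype _).summable) hsigma).trans ?_
  exact tsum_congr fun m => (tsum_fintype _).trans (sum_coe_sort _ _)

theorem summable_prod_of_summable_sum_antidiagonal {f : ℕ × ℕ → ℝ} (hf : ∀ p, 0 ≤ f p)
    (h : Summable fun m => ∑ p ∈ antidiagonal m, f p) : Summable f := by
  rw [← HasAntidiagonal.sigmaAntidiagonalEquivProd.summable_iff]
  exact (summable_sigma_of_nonneg fun _ => hf _).2 ⟨fun m => Summable.of_finite,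
    h.congr fun m => ((tsum_fintype _).trans (sum_coe_sort _ _)).symm⟩

noncomputable def fcpCoeff (μ ϑ ζ : ℝ) (m : ℕ) : ℝ :=
  Gamma ϑ * risingFactorial ζ m / Gamma (μ * m + ϑ)

noncomputable def fcpMeanTerm (μ ϑ ζ a b : ℝ) (p : ℕ × ℕ) : ℝ :=
  fcpCoeff μ ϑ ζ (p.1 + p.2) * (p.1 * a ^ p.1 * b ^ p.2 / (p.1 ! * p.2 !))

section FcpMeanTerm

variable {μ ϑ ζ : ℝ}

theorem natCast_mul_fcpP (hζ : 0 < ζ) (θ lam t : ℝ) (n : ℕ) :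
    n * fcpP μ ϑ ζ θ lam n t = ∑' k, fcpMeanTerm μ ϑ ζ (lam * t ^ θ) (-(lam * t ^ θ)) (n, k) := by
  rw [fcpP, ← mul_assoc, ← tsum_mul_left]
  refine tsum_congr fun k => ?_
  rw [fcpMeanTerm, fcpCoeff, ← risingFactorial_mul n k
    (Gamma_pos_of_pos (by positivity)).ne']
  ring

theorem fcpCoeff_nonneg (hμ : 0 ≤ μ) (hϑ : 0 < ϑ) (hζ : 0 < ζ) (m : ℕ) :
    0 ≤ fcpCoeff μ ϑ ζ m := by
  have := Gamma_pos_of_pos hζ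
  have := Gamma_pos_of_pos hϑ
  have := Gamma_pos_of_pos (by positivity : 0 < ζ + m)
  have := Gamma_pos_of_pos (by positivity : 0 < μ * m + ϑ)
  rw [fcpCoeff, risingFactorial]
  positivity

theorem fcpMeanTerm_nonneg (hμ : 0 ≤ μ) (hϑ : 0 < ϑ) (hζ : 0 < ζ) {a b : ℝ} (ha : 0 ≤ a)
    (hb : 0 ≤ b) (p : ℕ × ℕ) : 0 ≤ fcpMeanTerm μ ϑ ζ a b p :=
  mul_nonneg (fcpCoeff_nonneg hμ hϑ hζ _) (by positivity)

theorem abs_fcpMeanTerm_neg (hμ : 0 ≤ μ) (hϑ : 0 < ϑ) (hζ : 0 < ζ) (x : ℝ) (p : ℕ × ℕ) :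
    |fcpMeanTerm μ ϑ ζ x (-x) p| = fcpMeanTerm μ ϑ ζ |x| |x| p := by
  simp [fcpMeanTerm, abs_mul, abs_div, abs_of_nonneg (fcpCoeff_nonneg hμ hϑ hζ _)]

theorem sum_antidiagonal_fcpMeanTerm_succ (hζ : ζ ≠ 0) (a b : ℝ) (j : ℕ) :
    ∑ p ∈ antidiagonal (j + 1), fcpMeanTerm μ ϑ ζ a b p
      = Gamma ϑ * ζ * a * (prabhakarCoeff μ (ϑ + μ) (ζ + 1) j * (a + b) ^ j) := by
  have hcoeff : ∀ p ∈ antidiagonal (j + 1), fcpMeanTerm μ ϑ ζ a b p =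
      fcpCoeff μ ϑ ζ (j + 1) * (p.1 * a ^ p.1 * b ^ p.2 / (p.1 ! * p.2 !)) := by
    intro p hp
    rw [HasAntidiagonal.mem_antidiagonal] at hp
    rw [fcpMeanTerm, hp]
  rw [sum_congr rfl hcoeff, ← mul_sum, sum_antidiagonal_succ_mul_pow_mul_pow_div_factorial,
    fcpCoeff, risingFactorial_succ_left hζ, prabhakarCoeff]
  push_cast
  rw [show μ * (j + 1) + ϑ = μ * j + (ϑ + μ) by ring]
  ring

theorem summable_fcpMeanTerm (hμ : 0 < μ) (hϑ : 0 < ϑ) (hζ : 0 < ζ) {a b : ℝ} (ha : 0 ≤ a)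
    (hb : 0 ≤ b) : Summable (fcpMeanTerm μ ϑ ζ a b) := by
  refine summable_prod_of_summable_sum_antidiagonal (fcpMeanTerm_nonneg hμ.le hϑ hζ ha hb) ?_
  rw [← summable_nat_add_iff 1]
  simp only [sum_antidiagonal_fcpMeanTerm_succ hζ.ne']
  exact (summable_prabhakarCoeff_mul_pow hμ (by positivity) (by positivity) (a + b)).mul_left _

theorem summable_abs_fcpMeanTerm_neg (hμ : 0 < μ) (hϑ : 0 < ϑ) (hζ : 0 < ζ) (x : ℝ) :
    Summable fun p => |fcpMeanTerm μ ϑ ζ x (-x) p| := by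
  simp only [abs_fcpMeanTerm_neg hμ.le hϑ hζ]
  exact summable_fcpMeanTerm hμ hϑ hζ (abs_nonneg x) (abs_nonneg x)

theorem tsum_fcpMeanTerm_neg (hμ : 0 < μ) (hϑ : 0 < ϑ) (hζ : 0 < ζ) (x : ℝ) :
    ∑' p, fcpMeanTerm μ ϑ ζ x (-x) p = ζ * Gamma ϑ * x / Gamma (μ + ϑ) := by
  rw [(summable_abs_fcpMeanTerm_neg hμ hϑ hζ x).of_abs.tsum_prod_eq_tsum_sum_antidiagonal,
    tsum_eq_single 1]
  · have := Gamma_pos_of_pos (by positivity : 0 < 1 + ζ)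
    rw [sum_antidiagonal_fcpMeanTerm_succ hζ.ne', prabhakarCoeff]
    simp only [risingFactorial, Nat.cast_zero, add_zero, mul_zero, zero_add, pow_zero, mul_one,
      Nat.factorial_zero, Nat.cast_one, one_mul, add_comm ϑ μ, add_comm ζ 1]
    field_simp
  · rintro (_ | j) hj
    · simp [fcpMeanTerm]
    · rw [sum_antidiagonal_fcpMeanTerm_succ hζ.ne', add_neg_cancel, zero_pow (by omega)]
      ring

end FcpMeanTerm

theorem fcp_mean_general (μ ϑ ζ θ lam t : ℝ) (hμ : 0 < μ) (hζ : 0 < ζ)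
    (hϑ : μ * ζ ≤ ϑ) :
    (Summable fun n : ℕ => |(n : ℝ) * fcpP μ ϑ ζ θ lam n t|) ∧
    (∑' n : ℕ, (n : ℝ) * fcpP μ ϑ ζ θ lam n t
      = ζ * Real.Gamma ϑ * lam * t ^ θ / Real.Gamma (μ + ϑ)) := by
  have hϑ0 : 0 < ϑ := (mul_pos hμ hζ).trans_le hϑ
  have habs := summable_abs_fcpMeanTerm_neg hμ hϑ0 hζ (lam * t ^ θ)
  simp only [natCast_mul_fcpP hζ]
  refine ⟨habs.prod.of_nonneg_of_le (fun _ => abs_nonneg _) fun n => ?_, ?_⟩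
  · have hrow := habs.prod_factor n
    simp only [← Real.norm_eq_abs] at hrow ⊢
    exact norm_tsum_le_tsum_norm hrow
  · rw [← habs.of_abs.tsum_prod, tsum_fcpMeanTerm_neg hμ hϑ0 hζ]
    ring

/-- Mean of the fractional counting process:
`∑_n n P(n,t) = ζ Γ(ϑ) λ t^θ / Γ(μ+ϑ)`, the series converging absolutely. -/
theorem fcp_mean (μ ϑ ζ θ lam t : ℝ) (hμ : 0 < μ) (hμ1 : μ ≤ 1) (hζ : 0 < ζ)
    (hϑ : μ * ζ ≤ ϑ) (hθ : 0 < θ) (hθ1 : θ ≤ 1) (hlam : 0 < lam) (ht : 0 < t) :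
    (Summable fun n : ℕ => |(n : ℝ) * fcpP μ ϑ ζ θ lam n t|) ∧
    (∑' n : ℕ, (n : ℝ) * fcpP μ ϑ ζ θ lam n t
      = ζ * Real.Gamma ϑ * lam * t ^ θ / Real.Gamma (μ + ϑ)) :=
  fcp_mean_general μ ϑ ζ θ lam t hμ hζ hϑ
end
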